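/- arXiv:2602.16877 — 2 statements merged into one kernel-verified Lean document; each statement's English description precedes it below -/
import Mathlib

section
/- For every even integer Δ ≥ 2, set r = 3Δ + 6. Then 6 divides r, r ≥ 12, and the data (q1, q2, q3) = (r/2, r/3, r/6) with columns (r/2, r/2), (r/3, r/3, r/3), and (r/6, r/6, r/6, r/6, r/6, r/6 − 1, 1) is a valid GL(r)-configuration whose dimension r² − Σ_{i=1}^{3} Σ_j (λ_i^j)² equals exactly Δ. In particular the bound r = 3Δ + 6 is achieved for every even Δ ≥ 2. -/
/-- A `GL(r)`-configuration: `r ≥ 1`, widths `q1,q2,q3` with `q1+q2+q3 = r`,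
and three columns, each a weakly decreasing list of positive integers summing
to `r` with every part at most the corresponding width. -/
structure GLConfig where
  r : ℕ
  q : Fin 3 → ℕ
  col : Fin 3 → List ℕ
  r_pos : 1 ≤ r
  q_sum : q 0 + q 1 + q 2 = r
  col_sorted : ∀ i, (col i).Pairwise (· ≥ ·)
  col_pos : ∀ i, ∀ x ∈ col i, 0 < x
  col_le : ∀ i, ∀ x ∈ col i, x ≤ q i
  col_sum : ∀ i, (col i).sum = r

/-- The (box) dimension `Δ = r² − Σ_{i=1}^{3} Σ_j (λ_i^j)²` of a
`GL(r)`-configuration. -/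
def GLConfig.dim (C : GLConfig) : ℤ :=
  (C.r : ℤ) ^ 2 - ∑ i : Fin 3, ((C.col i).map (fun x => (x : ℤ) ^ 2)).sum

/-!
With `r = 6m` the columns `(3m, 3m)`, `(2m, 2m, 2m)` and `(m, m, m, m, m, m - 1, 1)` have
squared parts summing to `18m² + 12m² + 5m² + (m - 1)² + 1 = r² - (2m - 2)`, so the
configuration has dimension `2m - 2`; every even `Δ ≥ 2` is of this form with `m = Δ/2 + 1 ≥ 2`,
and then `r = 6m = 3Δ + 6`.
-/

namespace GLConfig

/-- The configuration with `r = 6m`; the condition `2 ≤ m` keeps the part `m - 1` positive. -/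
def extremal (m : ℕ) (hm : 2 ≤ m) : GLConfig where
  r := 6 * m
  q := ![3 * m, 2 * m, m]
  col := ![[3 * m, 3 * m], [2 * m, 2 * m, 2 * m], [m, m, m, m, m, m - 1, 1]]
  r_pos := by omega
  q_sum := by simp only [Fin.isValue, Matrix.cons_val]; ring
  col_sorted := by
    intro i
    fin_cases i <;> simp [List.pairwise_cons]
    omega
  col_pos := by
    intro i x hx
    fin_cases i <;> simp at hx <;> omega
  col_le := by
    intro i x hx
    fin_cases i <;> simp at hx ⊢ <;> omega
  col_sum := by
    intro i
    fin_cases i <;> simp <;> omega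

theorem dim_extremal {m : ℕ} (hm : 2 ≤ m) : (extremal m hm).dim = 2 * m - 2 := by
  have hpred : ((m - 1 : ℕ) : ℤ) = m - 1 := by omega
  simp [dim, extremal, Fin.sum_univ_three, hpred]
  ring

end GLConfig

/-- for every even integer `Δ ≥ 2`, setting `r = 3Δ + 6`, we have
`6 ∣ r`, `r ≥ 12`, and the data `(q1,q2,q3) = (r/2, r/3, r/6)` with columns
`(r/2, r/2)`, `(r/3, r/3, r/3)`, `(r/6, r/6, r/6, r/6, r/6, r/6 − 1, 1)` is a
valid `GL(r)`-configuration of dimension exactly `Δ`: the bound is achieved. -/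
theorem GLConfig.bound_achieved (Δ : ℤ) (hΔeven : Even Δ) (hΔ : 2 ≤ Δ) :
    ∃ C : GLConfig, (C.r : ℤ) = 3 * Δ + 6 ∧ 6 ∣ C.r ∧ 12 ≤ C.r ∧
      C.q 0 = C.r / 2 ∧ C.q 1 = C.r / 3 ∧ C.q 2 = C.r / 6 ∧
      C.col 0 = [C.r / 2, C.r / 2] ∧
      C.col 1 = [C.r / 3, C.r / 3, C.r / 3] ∧
      C.col 2 = [C.r / 6, C.r / 6, C.r / 6, C.r / 6, C.r / 6, C.r / 6 - 1, 1] ∧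
      C.dim = Δ := by
  obtain ⟨m, hm, rfl⟩ : ∃ m : ℕ, 2 ≤ m ∧ Δ = 2 * m - 2 := by
    obtain ⟨k, rfl⟩ := hΔeven
    exact ⟨(k + 1).toNat, by omega, by omega⟩
  have h2 : 6 * m / 2 = 3 * m := by omega
  have h3 : 6 * m / 3 = 2 * m := by omega
  have h6 : 6 * m / 6 = m := by omega
  refine ⟨extremal m hm, ?_, ⟨m, rfl⟩, show 12 ≤ 6 * m by omega, h2.symm, h3.symm, h6.symm,
    ?_, ?_, ?_, dim_extremal hm⟩
  · show ((6 * m : ℕ) : ℤ) = 3 * (2 * m - 2) + 6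
    push_cast
    ring
  · show [3 * m, 3 * m] = [6 * m / 2, 6 * m / 2]
    rw [h2]
  · show [2 * m, 2 * m, 2 * m] = [6 * m / 3, 6 * m / 3, 6 * m / 3]
    rw [h3]
  · show [m, m, m, m, m, m - 1, 1] = [6 * m / 6, 6 * m / 6, 6 * m / 6, 6 * m / 6, 6 * m / 6,
      6 * m / 6 - 1, 1]
    rw [h6]
end

section
/- Let d > 2 be an even integer. Then every GL(r)-configuration whose dimension Δ satisfies Δ + 2 = d has r ≤ 3d. (This is the combinatorial content of the statement that every MC-minimal relative character variety with G = GL(r) of dimension d on the thrice-punctured projective line has rank r ≤ 3d, since such a character variety of dimension d determines a GL(r)-configuration with d = Δ + 2.) -/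
/-!
Write `T_i = Σ_j λ_i^j (q_i - λ_i^j)` for the defect of column `i`. Since
`Σ_j (λ_i^j)² + T_i = q_i r` and `q_1 + q_2 + q_3 = r`, the dimension is `Δ = T_1 + T_2 + T_3`.
A column all of whose parts equal `q_i` has `T_i = 0` and `q_i ∣ r`; any other column has a
part `0 < λ < q_i`, whence `T_i ≥ q_i - 1`. If at most one column is full this gives
`r ≤ 2Δ + 4`, as a full column has `q_i ≤ r / 2`. If two columns are full, either
`r ≤ 3 q_c + 3` for the third one, or the cofactors `m, n` of the full widths satisfy
`1/m + 1/n > 2/3`, leaving `q_c ∈ {r/4, r/6, 3r/10}`. The short parts `λ < q_c` of column `c`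
have a sum `S ≡ r (mod q_c)`. Either `S ≥ q_c`, so there are at least two short parts and
`T_c ≥ 2 (q_c - 1)`; or `S = r mod q_c`, which only happens for `q_c = 3r/10`, where
`S = r/10` and `T_c ≥ S (q_c - S) = 2 S²`.
-/

namespace Nat

theorem sub_one_le_mul_sub {x q : ℕ} (hx : 0 < x) (hxq : x < q) : q - 1 ≤ x * (q - x) := by
  obtain ⟨b, rfl⟩ := Nat.exists_eq_add_of_lt hxq
  rw [show x + b + 1 - x = b + 1 by omega, show x + b + 1 - 1 = x + b by omega]
  nlinarith

theorem eq_of_dvd_of_dvd_of_three_mul_lt {a b c r : ℕ} (h : a + b + c = r) (ha : a ∣ r)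
    (hb : b ∣ r) (hc : 0 < c) (hcr : 3 * c < r) : r = 4 * c ∨ r = 6 * c ∨ 3 * r = 10 * c := by
  obtain ⟨m, hm⟩ := ha
  obtain ⟨n, hn⟩ := hb
  -- the cofactors satisfy `1/m + 1/n > 2/3` with `m, n ≥ 2`
  have hm2 : 2 ≤ m := by by_contra; interval_cases m <;> omega
  have hn2 : 2 ≤ n := by by_contra; interval_cases n <;> omega
  have hm5 : m ≤ 5 := by by_contra; nlinarith
  have hn5 : n ≤ 5 := by by_contra; nlinarith
  interval_cases m <;> interval_cases n <;> omega

end Nat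

namespace List

variable {q : ℕ} {l : List ℕ}

theorem sum_map_sq_add_sum_map_mul_sub (h : ∀ x ∈ l, x ≤ q) :
    (l.map (· ^ 2)).sum + (l.map fun x => x * (q - x)).sum = q * l.sum := by
  have := sum_map_mul_left l (fun x => x) q
  rw [map_id'] at this
  rw [← sum_map_add, ← this]
  refine congrArg sum (map_congr_left fun x hx => ?_)
  obtain ⟨y, rfl⟩ := Nat.exists_eq_add_of_le (h x hx)
  rw [Nat.add_sub_cancel_left]
  ring

theorem sum_eq_mul_count_add_sum_filter_lt (h : ∀ x ∈ l, x ≤ q) :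
    l.sum = q * l.count q + (l.filter (· < q)).sum := by
  induction l with
  | nil => simp
  | cons a t ih =>
    have := ih fun x hx => h x (mem_cons_of_mem a hx)
    by_cases hlt : a < q
    · rw [sum_cons, count_cons_of_ne hlt.ne, filter_cons_of_pos (by simpa), sum_cons]
      omega
    · obtain rfl : a = q := by have := h a mem_cons_self; omega
      rw [sum_cons, count_cons_self, filter_cons_of_neg (by simp), mul_add]
      omega

theorem length_mul_sub_one_le_sum_map_mul_sub (h : ∀ x ∈ l, 0 < x ∧ x < q) :
    l.length * (q - 1) ≤ (l.map fun x => x * (q - x)).sum := by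
  simpa using (l.map fun x => x * (q - x)).card_nsmul_le_sum (q - 1) (by
    simp only [mem_map, forall_exists_index, and_imp]
    rintro _ x hx rfl
    exact Nat.sub_one_le_mul_sub (h x hx).1 (h x hx).2)

theorem sum_mul_sub_sum_le_sum_map_mul_sub :
    l.sum * (q - l.sum) ≤ (l.map fun x => x * (q - x)).sum := by
  have := sum_map_mul_right l (fun x => x) (q - l.sum)
  rw [map_id'] at this
  rw [← this]
  exact sum_le_sum fun x hx =>
    Nat.mul_le_mul_left x (Nat.sub_le_sub_left (single_le_sum (by simp) x hx) q)

end List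

namespace GLConfig

theorem le_two_mul_add_four_of_dvd {a b c r Tb Tc : ℕ} (h : a + b + c = r) (ha : a ∣ r)
    (hbc : 0 < b + c) (hb : b - 1 ≤ Tb) (hc : c - 1 ≤ Tc) : r ≤ 2 * (Tb + Tc) + 4 := by
  have : 2 * a ≤ r := by
    by_contra hlt
    have := Nat.eq_of_dvd_of_lt_two_mul (by omega) ha (by omega)
    omega
  omega

theorem le_three_mul_add_six_of_dvd_of_dvd {a b c r T : ℕ} (h : a + b + c = r) (ha : a ∣ r)
    (hb : b ∣ r) (hc : 0 < c) (hT : c - 1 ≤ T)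
    (hT' : 2 * (c - 1) ≤ T ∨ 0 < r % c ∧ r % c * (c - r % c) ≤ T) : r ≤ 3 * T + 6 := by
  by_cases hcr : r ≤ 3 * c
  · omega
  rcases Nat.eq_of_dvd_of_dvd_of_three_mul_lt h ha hb hc (by omega) with hr | hr | hr
  · have : r % c = 0 := by simp [hr]
    omega
  · have : r % c = 0 := by simp [hr]
    omega
  · obtain ⟨s, rfl, rfl⟩ : ∃ s, c = 3 * s ∧ r = 10 * s := ⟨c / 3, by omega, by omega⟩
    have : 10 * s % (3 * s) = s := by
      rw [show 10 * s = 3 * s * 3 + s by ring, Nat.mul_add_mod, Nat.mod_eq_of_lt (by omega)]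
    rw [this, show 3 * s - s = 2 * s by omega] at hT'
    rcases hT' with hT' | ⟨-, hT'⟩
    · omega
    · nlinarith

variable (C : GLConfig) (i : Fin 3)

def defect : ℕ := ((C.col i).map fun x => x * (C.q i - x)).sum

def IsFull : Prop := ∀ x ∈ C.col i, x = C.q i

def shortParts : List ℕ := (C.col i).filter (· < C.q i)

theorem q_pos : 0 < C.q i := by
  obtain ⟨x, hx, -⟩ := List.exists_mem_ne_zero_of_sum_ne_zero <|
    (C.col_sum i).trans_ne (Nat.one_le_iff_ne_zero.1 C.r_pos)
  exact (C.col_pos i x hx).trans_le (C.col_le i x hx)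

-- As in `GLConfig.dim`, the left-hand side maps over `C.col i` coerced to a `List ℤ`
-- (a `flatMap`), hence `List.map_eq_flatMap` below.
theorem sum_map_sq_add_defect :
    ((C.col i).map fun x => (x : ℤ) ^ 2).sum + C.defect i = C.q i * C.r := by
  have := (C.col i).sum_map_sq_add_sum_map_mul_sub (C.col_le i)
  rw [C.col_sum i] at this
  simpa [defect, Nat.cast_list_sum, Function.comp_def, ← List.map_eq_flatMap]
    using congrArg (Nat.cast : ℕ → ℤ) this

theorem dim_eq_sum_defect : C.dim = ∑ i, (C.defect i : ℤ) := by
  have hq : (C.q 0 + C.q 1 + C.q 2 : ℤ) = C.r := by exact_mod_cast C.q_sum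
  rw [dim, Fin.sum_univ_three, Fin.sum_univ_three]
  linear_combination -(C.r : ℤ) * hq - C.sum_map_sq_add_defect 0 - C.sum_map_sq_add_defect 1
    - C.sum_map_sq_add_defect 2

variable {C i}

theorem IsFull.dvd (h : C.IsFull i) : C.q i ∣ C.r := by
  rw [← C.col_sum i, List.sum_eq_card_nsmul _ _ h]
  exact Dvd.intro_left _ (smul_eq_mul ..).symm

theorem IsFull.defect_eq_zero (h : C.IsFull i) : C.defect i = 0 :=
  List.sum_eq_zero <| by
    simp only [List.mem_map]
    rintro _ ⟨x, hx, rfl⟩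
    simp [h x hx]

theorem mem_shortParts {x : ℕ} (hx : x ∈ C.shortParts i) : 0 < x ∧ x < C.q i := by
  rw [shortParts, List.mem_filter, decide_eq_true_iff] at hx
  exact ⟨C.col_pos i x hx.1, hx.2⟩

theorem shortParts_ne_nil (h : ¬C.IsFull i) : C.shortParts i ≠ [] := by
  simp only [IsFull, not_forall] at h
  obtain ⟨x, hx, hxq⟩ := h
  exact List.ne_nil_of_mem
    (List.mem_filter.2 ⟨hx, by simpa using lt_of_le_of_ne (C.col_le i x hx) hxq⟩)

theorem r_mod_q_eq_sum_shortParts_mod : C.r % C.q i = (C.shortParts i).sum % C.q i := by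
  rw [← C.col_sum i, (C.col i).sum_eq_mul_count_add_sum_filter_lt (C.col_le i), Nat.mul_add_mod,
    shortParts]

theorem sum_map_shortParts_le_defect :
    ((C.shortParts i).map fun x => x * (C.q i - x)).sum ≤ C.defect i :=
  (List.filter_sublist.map _).sum_le_sum fun _ _ => Nat.zero_le _

theorem length_shortParts_mul_le_defect :
    (C.shortParts i).length * (C.q i - 1) ≤ C.defect i :=
  (List.length_mul_sub_one_le_sum_map_mul_sub fun _ => mem_shortParts).trans
    sum_map_shortParts_le_defect

theorem sub_one_le_defect (h : ¬C.IsFull i) : C.q i - 1 ≤ C.defect i :=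
  (Nat.le_mul_of_pos_left _ (List.length_pos_iff.2 (shortParts_ne_nil h))).trans
    length_shortParts_mul_le_defect

theorem two_mul_sub_one_le_defect_or (h : ¬C.IsFull i) :
    2 * (C.q i - 1) ≤ C.defect i ∨
      0 < C.r % C.q i ∧ C.r % C.q i * (C.q i - C.r % C.q i) ≤ C.defect i := by
  have hq := C.q_pos i
  set S := (C.shortParts i).sum
  by_cases hS : C.q i ≤ S
  · have hlen : S ≤ (C.shortParts i).length * (C.q i - 1) := by
      simpa [mul_comm] using (C.shortParts i).sum_le_card_nsmul _
        fun x hx => Nat.le_sub_one_of_lt (mem_shortParts hx).2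
    have : 2 ≤ (C.shortParts i).length := by
      by_contra! hlt
      interval_cases (C.shortParts i).length <;> omega
    exact .inl ((Nat.mul_le_mul_right _ this).trans length_shortParts_mul_le_defect)
  · have hr : C.r % C.q i = S := by
      rw [C.r_mod_q_eq_sum_shortParts_mod, Nat.mod_eq_of_lt (by omega)]
    rw [hr]
    exact .inr ⟨List.sum_pos _ (fun _ hx => (mem_shortParts hx).1) (shortParts_ne_nil h),
      List.sum_mul_sub_sum_le_sum_map_mul_sub.trans sum_map_shortParts_le_defect⟩

variable (C)

theorem r_le_three_mul_sum_defect_add_six (h : 0 < ∑ i, C.defect i) :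
    C.r ≤ 3 * ∑ i, C.defect i + 6 := by
  rw [Fin.sum_univ_three] at h ⊢
  have hq := C.q_sum
  have := C.q_pos 1
  have := C.q_pos 2
  by_cases h0 : C.IsFull 0 <;> by_cases h1 : C.IsFull 1 <;> by_cases h2 : C.IsFull 2
  · simp [h0.defect_eq_zero, h1.defect_eq_zero, h2.defect_eq_zero] at h
  · have := le_three_mul_add_six_of_dvd_of_dvd hq h0.dvd h1.dvd (C.q_pos 2)
      (sub_one_le_defect h2) (two_mul_sub_one_le_defect_or h2)
    omega
  · have := le_three_mul_add_six_of_dvd_of_dvd (by omega) h0.dvd h2.dvd (C.q_pos 1)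
      (sub_one_le_defect h1) (two_mul_sub_one_le_defect_or h1)
    omega
  · have := le_two_mul_add_four_of_dvd hq h0.dvd (by omega) (sub_one_le_defect h1)
      (sub_one_le_defect h2)
    omega
  · have := le_three_mul_add_six_of_dvd_of_dvd (by omega) h1.dvd h2.dvd (C.q_pos 0)
      (sub_one_le_defect h0) (two_mul_sub_one_le_defect_or h0)
    omega
  · have := le_two_mul_add_four_of_dvd (by omega) h1.dvd (by omega) (sub_one_le_defect h0)
      (sub_one_le_defect h2)
    omega
  · have := le_two_mul_add_four_of_dvd (by omega) h2.dvd (by omega) (sub_one_le_defect h0)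
      (sub_one_le_defect h1)
    omega
  · have := sub_one_le_defect h0
    have := sub_one_le_defect h1
    have := sub_one_le_defect h2
    omega

end GLConfig

theorem GLConfig.rank_le_of_charvar_dim_general (d : ℤ) (hd : 2 < d)
    (C : GLConfig) (hdim : C.dim + 2 = d) : (C.r : ℤ) ≤ 3 * d := by
  rw [C.dim_eq_sum_defect, ← Nat.cast_sum] at hdim
  have := C.r_le_three_mul_sum_defect_add_six (by omega)
  omega

/-- for `d > 2` even, every `GL(r)`-configuration whose
dimension `Δ` satisfies `Δ + 2 = d` has `r ≤ 3d`. (Combinatorial content of: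
every MC-minimal relative character variety with `G = GL(r)` of dimension `d`
on `ℙ¹ ∖ {t1,t2,t3}` has rank `r ≤ 3d`.) -/
theorem GLConfig.rank_le_of_charvar_dim (d : ℤ) (hd : 2 < d) (hdeven : Even d)
    (C : GLConfig) (hdim : C.dim + 2 = d) : (C.r : ℤ) ≤ 3 * d :=
  GLConfig.rank_le_of_charvar_dim_general d hd C hdim
end
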